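/- Define Φ(t,X) = e^t X / √(1 + |X|²(e^{2t} − 1)) for t ≥ 0 and X ∈ ℝ². There is an absolute constant C > 0 such that for every t ≥ 0 and every X ∈ ℝ² with |X| ≤ 1, the second derivative in X of the map Φ(t,·) at X satisfies ‖D²_X Φ(t,X)‖ ≤ C·e^t·√(e^{2t} − 1). -/

import Mathlib

open Real Set
open RealInnerProductSpace

noncomputable section

/-- The plane ℝ² with its Euclidean norm. -/
abbrev E2 := EuclideanSpace ℝ (Fin 2)

/-- The flow `Φ(t,X) = eᵗX / √(1 + |X|²(e^{2t} - 1))` of the ODE `y' = (1-|y|²)y`. -/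
def Phi (t : ℝ) (X : E2) : E2 :=
  (Real.exp t / Real.sqrt (1 + ‖X‖ ^ 2 * (Real.exp (2 * t) - 1))) • X

def fA (c a s : ℝ) : ℝ := c / Real.sqrt (1 + s * a)
def fB (c a s : ℝ) : ℝ := -(c * a) / (2 * ((1 + s * a) * Real.sqrt (1 + s * a)))
def fC (c a s : ℝ) : ℝ := 3 * c * a ^ 2 / (4 * ((1 + s * a) ^ 2 * Real.sqrt (1 + s * a)))

lemma hq_pos {a s : ℝ} (ha : 0 ≤ a) (hs : 0 ≤ s) : (0:ℝ) < 1 + s * a := by positivity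

lemma hasDerivAt_q (a s : ℝ) : HasDerivAt (fun s => 1 + s * a) a s := by
  simpa using ((hasDerivAt_id s).mul_const a).const_add 1

lemma hasDerivAt_fA {c a : ℝ} (ha : 0 ≤ a) {s : ℝ} (hs : 0 ≤ s) :
    HasDerivAt (fA c a) (fB c a s) s := by
  have hq := hq_pos ha hs
  have hw : (0:ℝ) < Real.sqrt (1 + s * a) := Real.sqrt_pos.2 hq
  have hsq : HasDerivAt (fun s => Real.sqrt (1 + s * a)) (1 / (2 * Real.sqrt (1 + s * a)) * a) s :=
    (Real.hasDerivAt_sqrt hq.ne').comp s (hasDerivAt_q a s)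
  have := (hasDerivAt_const s c).div hsq hw.ne'
  refine HasDerivAt.congr_deriv (f := fA c a) this ?_
  symm
  have h2 : Real.sqrt (1 + s * a) ^ 2 = 1 + s * a := Real.sq_sqrt hq.le
  rw [fB]
  set w := Real.sqrt (1 + s * a) with hwdef
  rw [← h2]
  field_simp
  ring

lemma hasDerivAt_fB {c a : ℝ} (ha : 0 ≤ a) {s : ℝ} (hs : 0 ≤ s) :
    HasDerivAt (fB c a) (fC c a s) s := by
  have hq := hq_pos ha hs
  have hw : (0:ℝ) < Real.sqrt (1 + s * a) := Real.sqrt_pos.2 hq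
  have hsq : HasDerivAt (fun s => Real.sqrt (1 + s * a)) (1 / (2 * Real.sqrt (1 + s * a)) * a) s :=
    (Real.hasDerivAt_sqrt hq.ne').comp s (hasDerivAt_q a s)
  have hden : HasDerivAt (fun s => 2 * ((1 + s * a) * Real.sqrt (1 + s * a)))
      (2 * (a * Real.sqrt (1 + s * a) + (1 + s * a) * (1 / (2 * Real.sqrt (1 + s * a)) * a))) s :=
    ((hasDerivAt_q a s).mul hsq).const_mul 2
  have hden0 : 2 * ((1 + s * a) * Real.sqrt (1 + s * a)) ≠ 0 := by positivity
  have := (hasDerivAt_const s (-(c * a))).div hden hden0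
  refine HasDerivAt.congr_deriv (f := fB c a) this ?_
  symm
  have h2 : Real.sqrt (1 + s * a) ^ 2 = 1 + s * a := Real.sq_sqrt hq.le
  rw [fC]
  set w := Real.sqrt (1 + s * a) with hwdef
  rw [← h2]
  field_simp
  ring

lemma key_ineq {c a r : ℝ} (hc : 0 < c) (ha : 0 ≤ a) (hr : 0 ≤ r) :
    6 * |fB c a (r ^ 2)| * r + 4 * |fC c a (r ^ 2)| * r ^ 3 ≤ 6 * c * Real.sqrt a := by
  set q : ℝ := 1 + r ^ 2 * a with hqdef
  have hq1 : 1 ≤ q := by nlinarith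
  have hq0 : 0 < q := by linarith
  set w : ℝ := Real.sqrt q with hwdef
  set v : ℝ := Real.sqrt a with hvdef
  have hw1 : 1 ≤ w := by rw [hwdef]; exact Real.one_le_sqrt.2 hq1
  have hw0 : 0 < w := by linarith
  have hw2 : w ^ 2 = q := Real.sq_sqrt hq0.le
  have hv0 : 0 ≤ v := Real.sqrt_nonneg a
  have h1 : a * r ≤ v * w := by
    have e1 : a * r = Real.sqrt ((a * r) ^ 2) := (Real.sqrt_sq (by positivity)).symm
    have e2 : v * w = Real.sqrt (a * q) := (Real.sqrt_mul ha q).symm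
    rw [e1, e2]
    apply Real.sqrt_le_sqrt
    nlinarith
  have h2 : a ^ 2 * r ^ 3 ≤ q * (v * w) := by
    have har2 : a * r ^ 2 ≤ q := by nlinarith
    nlinarith [mul_nonneg ha hr, mul_nonneg hv0 hw0.le]
  have hfB : |fB c a (r ^ 2)| = c * a / (2 * (q * w)) := by
    rw [fB, abs_div, abs_neg, abs_of_nonneg (by positivity), abs_of_nonneg (by positivity)]
  have hfC : |fC c a (r ^ 2)| = 3 * c * a ^ 2 / (4 * (q ^ 2 * w)) := by
    rw [fC, abs_div, abs_of_nonneg (by positivity), abs_of_nonneg (by positivity)]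
  rw [hfB, hfC]
  have t1 : 6 * (c * a / (2 * (q * w))) * r = 3 * c * (a * r) / (q * w) := by
    field_simp; ring
  have t2 : 4 * (3 * c * a ^ 2 / (4 * (q ^ 2 * w))) * r ^ 3 = 3 * c * (a ^ 2 * r ^ 3) / (q ^ 2 * w) := by
    field_simp
  rw [t1, t2]
  have hvw : 0 ≤ v * w := mul_nonneg hv0 hw0.le
  have b1 : 3 * c * (a * r) / (q * w) ≤ 3 * c * v := by
    rw [div_le_iff₀ (by positivity)]
    have s1 : v * w ≤ v * w * q := le_mul_of_one_le_right hvw hq1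
    have s2 : a * r ≤ v * w * q := h1.trans s1
    have := mul_le_mul_of_nonneg_left s2 (show (0:ℝ) ≤ 3 * c by positivity)
    nlinarith [this]
  have b2 : 3 * c * (a ^ 2 * r ^ 3) / (q ^ 2 * w) ≤ 3 * c * v := by
    rw [div_le_iff₀ (by positivity)]
    have s1 : q * (v * w) ≤ q ^ 2 * (v * w) := by
      nlinarith [mul_nonneg (mul_nonneg hq0.le (sub_nonneg.2 hq1)) hvw]
    have s2 : a ^ 2 * r ^ 3 ≤ q ^ 2 * (v * w) := h2.trans s1
    have := mul_le_mul_of_nonneg_left s2 (show (0:ℝ) ≤ 3 * c by positivity)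
    nlinarith [this]
  linarith

lemma inner_self_hasFDerivAt (Y : E2) :
    HasFDerivAt (fun Z : E2 => (⟪Z, Z⟫ : ℝ)) ((2:ℝ) • innerSL ℝ Y) Y := by
  have h := (hasFDerivAt_id (𝕜 := ℝ) Y).inner ℝ (hasFDerivAt_id Y)
  refine h.congr_fderiv ?_
  ext h1
  simp only [ContinuousLinearMap.smul_apply, innerSL_apply_apply, two_smul,
    ContinuousLinearMap.add_apply, fderivInnerCLM_apply, ContinuousLinearMap.comp_apply,
    ContinuousLinearMap.prod_apply, ContinuousLinearMap.coe_id', id_eq, smul_eq_mul]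
  rw [real_inner_comm Y h1]

lemma phi_eq (t : ℝ) :
    (fun Z : E2 => Phi t Z)
      = fun Z : E2 => fA (Real.exp t) (Real.exp (2 * t) - 1) (⟪Z, Z⟫ : ℝ) • Z := by
  funext Z
  simp only [Phi, fA, real_inner_self_eq_norm_sq]

lemma hasFDerivAt_Phi {t : ℝ} (ht : 0 ≤ t) (Y : E2) :
    HasFDerivAt (fun Z : E2 => Phi t Z)
      (fA (Real.exp t) (Real.exp (2 * t) - 1) (⟪Y, Y⟫ : ℝ) • ContinuousLinearMap.id ℝ E2
        + (2 * fB (Real.exp t) (Real.exp (2 * t) - 1) (⟪Y, Y⟫ : ℝ))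
            • ((innerSL ℝ Y).smulRight Y)) Y := by
  set c := Real.exp t
  set a := Real.exp (2 * t) - 1 with hadef
  have ha : 0 ≤ a := by
    have h1 : (1:ℝ) ≤ Real.exp (2 * t) := Real.one_le_exp (by linarith)
    rw [hadef]; linarith
  have hs0 : (0:ℝ) ≤ ⟪Y, Y⟫ := real_inner_self_nonneg
  have hn := inner_self_hasFDerivAt Y
  have hcomp : HasFDerivAt (fA c a ∘ fun Z : E2 => (⟪Z, Z⟫ : ℝ))
      (fB c a (⟪Y, Y⟫ : ℝ) • ((2:ℝ) • innerSL ℝ Y)) Y :=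
    HasDerivAt.comp_hasFDerivAt (f := fun Z : E2 => (⟪Z, Z⟫ : ℝ)) Y
      (hasDerivAt_fA ha hs0) hn
  rw [phi_eq t]
  have h := hcomp.smul (hasFDerivAt_id Y)
  refine h.congr_fderiv ?_
  ext v
  simp only [ContinuousLinearMap.add_apply, ContinuousLinearMap.smul_apply,
    ContinuousLinearMap.coe_id', id_eq, ContinuousLinearMap.smulRight_apply,
    innerSL_apply_apply, smul_eq_mul, Function.comp, PiLp.add_apply, PiLp.smul_apply]
  ring

set_option maxHeartbeats 2000000 in
set_option synthInstance.maxHeartbeats 1000000 in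
/-- the second spatial derivative of `Φ(t,·)` satisfies
`‖D²_X Φ(t,X)‖ ≤ C eᵗ √(e^{2t}-1)` for `|X| ≤ 1`, `t ≥ 0`. -/
theorem Phi_second_derivative_bound :
    ∃ C > (0:ℝ), ∀ t ≥ (0:ℝ), ∀ X : E2, ‖X‖ ≤ 1 →
      ‖fderiv ℝ (fderiv ℝ (fun Y => Phi t Y)) X‖
        ≤ C * Real.exp t * Real.sqrt (Real.exp (2 * t) - 1) := by
  refine ⟨6, by norm_num, ?_⟩
  intro t ht X hX
  set c := Real.exp t with hcdef
  set a := Real.exp (2 * t) - 1 with hadef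
  have hc : 0 < c := Real.exp_pos t
  have ha : 0 ≤ a := by
    have h1 : (1:ℝ) ≤ Real.exp (2 * t) := Real.one_le_exp (by linarith)
    rw [hadef]; linarith
  set s : ℝ := (⟪X, X⟫ : ℝ) with hsdef
  have hs_eq : s = ‖X‖ ^ 2 := real_inner_self_eq_norm_sq X
  have hs0 : (0:ℝ) ≤ s := by rw [hs_eq]; positivity
  -- first derivative as a function
  have hfd : fderiv ℝ (fun Y => Phi t Y)
      = fun Y : E2 => fA c a (⟪Y, Y⟫ : ℝ) • ContinuousLinearMap.id ℝ E2
          + (2 * fB c a (⟪Y, Y⟫ : ℝ)) • ((innerSL ℝ Y).smulRight Y) :=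
    funext fun Y => (hasFDerivAt_Phi ht Y).fderiv
  -- the bilinear map (u, v) ↦ ⟪u, ·⟫ • v
  set SmB : E2 →L[ℝ] E2 →L[ℝ] (E2 →L[ℝ] E2) :=
    (ContinuousLinearMap.smulRightL ℝ E2 E2).comp (innerSL ℝ) with hSmBdef
  -- derivative of Y ↦ (innerSL Y).smulRight Y
  have hSm : HasFDerivAt (fun Y : E2 => (innerSL ℝ Y).smulRight Y)
      ((SmB X).comp (ContinuousLinearMap.id ℝ E2) + SmB.flip X) X := by
    have h0 := (SmB.hasFDerivAt (x := X)).clm_apply (hasFDerivAt_id X)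
    exact h0
  -- scalar derivatives
  have hn := inner_self_hasFDerivAt X
  have hA1 : HasFDerivAt (fun Y : E2 => fA c a (⟪Y, Y⟫ : ℝ))
      (fB c a s • ((2:ℝ) • innerSL ℝ X)) X :=
    HasDerivAt.comp_hasFDerivAt (f := fun Z : E2 => (⟪Z, Z⟫ : ℝ)) X
      (hasDerivAt_fA ha hs0) hn
  have hB1 : HasFDerivAt (fun Y : E2 => fB c a (⟪Y, Y⟫ : ℝ))
      (fC c a s • ((2:ℝ) • innerSL ℝ X)) X :=
    HasDerivAt.comp_hasFDerivAt (f := fun Z : E2 => (⟪Z, Z⟫ : ℝ)) X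
      (hasDerivAt_fB ha hs0) hn
  have hB2 : HasFDerivAt (fun Y : E2 => 2 * fB c a (⟪Y, Y⟫ : ℝ))
      ((2:ℝ) • (fC c a s • ((2:ℝ) • innerSL ℝ X))) X := hB1.const_mul 2
  -- second derivative
  have hT : HasFDerivAt
      (fun Y : E2 => fA c a (⟪Y, Y⟫ : ℝ) • ContinuousLinearMap.id ℝ E2
          + (2 * fB c a (⟪Y, Y⟫ : ℝ)) • ((innerSL ℝ Y).smulRight Y))
      ((fA c a s • (0 : E2 →L[ℝ] E2 →L[ℝ] E2)
          + (fB c a s • ((2:ℝ) • innerSL ℝ X)).smulRight (ContinuousLinearMap.id ℝ E2))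
        + ((2 * fB c a s) • ((SmB X).comp (ContinuousLinearMap.id ℝ E2) + SmB.flip X)
          + ((2:ℝ) • (fC c a s • ((2:ℝ) • innerSL ℝ X))).smulRight
              ((innerSL ℝ X).smulRight X))) X :=
    (hA1.smul (hasFDerivAt_const _ _)).add (hB2.smul hSm)
  rw [hfd, hT.fderiv]
  have hgoal : (6:ℝ) * c * Real.sqrt a = 6 * c * Real.sqrt a := rfl
  -- bound the operator norm
  have hbound : ‖(fA c a s • (0 : E2 →L[ℝ] E2 →L[ℝ] E2)
          + (fB c a s • ((2:ℝ) • innerSL ℝ X)).smulRight (ContinuousLinearMap.id ℝ E2))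
        + ((2 * fB c a s) • ((SmB X).comp (ContinuousLinearMap.id ℝ E2) + SmB.flip X)
          + ((2:ℝ) • (fC c a s • ((2:ℝ) • innerSL ℝ X))).smulRight
              ((innerSL ℝ X).smulRight X))‖ ≤ 6 * c * Real.sqrt a := by
    apply ContinuousLinearMap.opNorm_le_bound _ (by positivity)
    intro h
    set r := ‖X‖ with hrdef
    have hr0 : (0:ℝ) ≤ r := norm_nonneg X
    have hh0 : (0:ℝ) ≤ ‖h‖ := norm_nonneg h
    have hXh : |(⟪X, h⟫ : ℝ)| ≤ r * ‖h‖ := abs_real_inner_le_norm X h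
    have hfBa : (0:ℝ) ≤ |fB c a s| := abs_nonneg _
    have hfCa : (0:ℝ) ≤ |fC c a s| := abs_nonneg _
    -- expand the application
    have happ : ((fA c a s • (0 : E2 →L[ℝ] E2 →L[ℝ] E2)
          + (fB c a s • ((2:ℝ) • innerSL ℝ X)).smulRight (ContinuousLinearMap.id ℝ E2))
        + ((2 * fB c a s) • ((SmB X).comp (ContinuousLinearMap.id ℝ E2) + SmB.flip X)
          + ((2:ℝ) • (fC c a s • ((2:ℝ) • innerSL ℝ X))).smulRight
              ((innerSL ℝ X).smulRight X))) h
        = (fB c a s * (2 * (⟪X, h⟫ : ℝ))) • ContinuousLinearMap.id ℝ E2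
          + ((2 * fB c a s) • (SmB X h + SmB h X)
            + (2 * (fC c a s * (2 * (⟪X, h⟫ : ℝ)))) • ((innerSL ℝ X).smulRight X)) := by
      simp only [ContinuousLinearMap.add_apply, ContinuousLinearMap.smul_apply,
        ContinuousLinearMap.zero_apply, smul_zero, zero_add,
        ContinuousLinearMap.smulRight_apply, ContinuousLinearMap.comp_apply,
        ContinuousLinearMap.flip_apply, ContinuousLinearMap.coe_id', id_eq,
        innerSL_apply_apply, smul_eq_mul]
      simp
      exact smul_zero (A := E2 →L[ℝ] E2) (fA c a s)
    rw [happ]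
    have hSmXh : ‖SmB X h‖ ≤ r * ‖h‖ := by
      rw [hSmBdef]
      simp only [ContinuousLinearMap.comp_apply]
      erw [ContinuousLinearMap.norm_smulRight_apply, innerSL_apply_norm]
    have hSmhX : ‖SmB h X‖ ≤ ‖h‖ * r := by
      rw [hSmBdef]
      simp only [ContinuousLinearMap.comp_apply]
      erw [ContinuousLinearMap.norm_smulRight_apply, innerSL_apply_norm]
    have hSmXX : ‖(innerSL ℝ X).smulRight X‖ = r * r := by
      rw [ContinuousLinearMap.norm_smulRight_apply, innerSL_apply_norm]
    have n1 : ‖(fB c a s * (2 * (⟪X, h⟫ : ℝ))) • ContinuousLinearMap.id ℝ E2‖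
        ≤ 2 * |fB c a s| * r * ‖h‖ := by
      refine (ContinuousLinearMap.opNorm_smul_le _ _).trans ?_
      calc ‖fB c a s * (2 * (⟪X, h⟫ : ℝ))‖ * ‖ContinuousLinearMap.id ℝ E2‖
          ≤ ‖fB c a s * (2 * (⟪X, h⟫ : ℝ))‖ * 1 :=
            mul_le_mul_of_nonneg_left ContinuousLinearMap.norm_id_le (norm_nonneg _)
        _ = |fB c a s| * (2 * |(⟪X, h⟫ : ℝ)|) := by
            rw [mul_one, Real.norm_eq_abs, abs_mul, abs_mul, abs_two]
        _ ≤ 2 * |fB c a s| * r * ‖h‖ := by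
            nlinarith [hXh, abs_nonneg ((⟪X, h⟫ : ℝ)), hfBa]
    have n2 : ‖(2 * fB c a s) • (SmB X h + SmB h X)‖ ≤ 4 * |fB c a s| * r * ‖h‖ := by
      refine (ContinuousLinearMap.opNorm_smul_le _ _).trans ?_
      have h1 : ‖SmB X h + SmB h X‖ ≤ r * ‖h‖ + ‖h‖ * r :=
        (norm_add_le _ _).trans (add_le_add hSmXh hSmhX)
      have h2 : ‖(2 : ℝ) * fB c a s‖ = 2 * |fB c a s| := by
        rw [Real.norm_eq_abs, abs_mul, abs_two]
      rw [h2]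
      nlinarith [norm_nonneg (SmB X h + SmB h X), h1, hfBa]
    have n3 : ‖(2 * (fC c a s * (2 * (⟪X, h⟫ : ℝ)))) • ((innerSL ℝ X).smulRight X)‖
        ≤ 4 * |fC c a s| * r ^ 3 * ‖h‖ := by
      refine (ContinuousLinearMap.opNorm_smul_le _ _).trans ?_
      rw [hSmXX, Real.norm_eq_abs, abs_mul, abs_mul, abs_mul, abs_two]
      nlinarith [mul_le_mul_of_nonneg_left hXh
        (mul_nonneg hfCa (mul_nonneg hr0 hr0)), abs_nonneg ((⟪X, h⟫ : ℝ))]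
    have key := key_ineq (c := c) (a := a) (r := r) hc ha hr0
    have hsr : s = r ^ 2 := by rw [hs_eq]
    calc ‖(fB c a s * (2 * (⟪X, h⟫ : ℝ))) • ContinuousLinearMap.id ℝ E2
          + ((2 * fB c a s) • (SmB X h + SmB h X)
            + (2 * (fC c a s * (2 * (⟪X, h⟫ : ℝ)))) • ((innerSL ℝ X).smulRight X))‖
        ≤ ‖(fB c a s * (2 * (⟪X, h⟫ : ℝ))) • ContinuousLinearMap.id ℝ E2‖
          + (‖(2 * fB c a s) • (SmB X h + SmB h X)‖
            + ‖(2 * (fC c a s * (2 * (⟪X, h⟫ : ℝ)))) • ((innerSL ℝ X).smulRight X)‖) :=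
          (norm_add_le _ _).trans (by gcongr; exact norm_add_le _ _)
      _ ≤ 2 * |fB c a s| * r * ‖h‖ + (4 * |fB c a s| * r * ‖h‖ + 4 * |fC c a s| * r ^ 3 * ‖h‖) :=
          by linarith
      _ = (6 * |fB c a (r ^ 2)| * r + 4 * |fC c a (r ^ 2)| * r ^ 3) * ‖h‖ := by
          rw [hsr]; ring
      _ ≤ 6 * c * Real.sqrt a * ‖h‖ := mul_le_mul_of_nonneg_right key hh0
  exact hbound
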